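/- arXiv:1608.04592 — 3 statements merged into one kernel-verified Lean document; each statement's English description precedes it below -/
import Mathlib

section
/- Soundness of the total-correctness Hoare proof system for data commands: if a triple {φ} π {φ'} is derivable in the total-correctness system (whose failure-statement rule requires φ ⇒ ℓ as a side condition, and which includes a decomposition rule inferring ⊢tot {φ} π {φ1 ∧ φ2} from ⊢par {φ} π {φ1} and ⊢tot {φ} π {φ2}), then every execution of π from a state satisfying φ terminates successfully (without reaching fail) in a state satisfying φ'. -/
/-- Data terms over variables `V` and data `D`. -/
inductive DTerm (V D : Type) where
  | var : V → DTerm V D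
  | const : D → DTerm V D
  | app : (List D → D) → List (DTerm V D) → DTerm V D

/-- Data atoms. -/
inductive Atom (V D : Type) where
  | bot : Atom V D
  | top : Atom V D
  | eq : DTerm V D → DTerm V D → Atom V D
  | rel : (List D → Prop) → List (DTerm V D) → Atom V D

/-- Data literals: atoms or negated atoms. -/
inductive Lit (V D : Type) where
  | pos : Atom V D → Lit V D
  | neg : Atom V D → Lit V D

/-- Data constraints: existential quantifications over a conjunction of literals. -/
inductive DC (V D : Type) where
  | ex : V → DC V D → DC V D
  | conj : List (Lit V D) → DC V D

/-- Data assignments: partial functions from variables to data (`none` = nil). -/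
abbrev Assg (V D : Type) := V → Option D

/-- Term evaluation; returns `none` (nil) if some variable is undefined. -/
def evalT (σ : Assg V D) : DTerm V D → Option D
  | .var x => σ x
  | .const d => some d
  | .app f ts => (ts.attach.mapM (fun t => evalT σ t.1)).map f
decreasing_by simp only [DTerm.app.sizeOf_spec]; have := List.sizeOf_lt_of_mem t.2; omega

/-- Variables of a term. -/
def varsT : DTerm V D → List V
  | .var x => [x]
  | .const _ => []
  | .app _ ts => ts.attach.flatMap (fun t => varsT t.1)
decreasing_by simp only [DTerm.app.sizeOf_spec]; have := List.sizeOf_lt_of_mem t.2; omega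

def varsA : Atom V D → List V
  | .bot => []
  | .top => []
  | .eq t1 t2 => varsT t1 ++ varsT t2
  | .rel _ ts => ts.flatMap varsT

def varsL : Lit V D → List V
  | .pos a => varsA a
  | .neg a => varsA a

/-- Free variables of a data constraint. -/
def freeDC [DecidableEq V] : DC V D → List V
  | .ex y φ => (freeDC φ).filter (fun z => z ≠ y)
  | .conj ls => ls.flatMap varsL

/-- Variables occurring (in atoms of) a data constraint. -/
def varsDC : DC V D → List V
  | .ex _ φ => varsDC φ
  | .conj ls => ls.flatMap varsL

/-- Bound variables (quantifier prefix) of a data constraint. -/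
def boundDC : DC V D → List V
  | .ex y φ => y :: boundDC φ
  | .conj _ => []

/-- Literals of the conjunctive kernel of a data constraint. -/
def lits : DC V D → List (Lit V D)
  | .ex _ φ => lits φ
  | .conj ls => ls

def symmEq : Lit V D → Option (Lit V D)
  | .pos (.eq t1 t2) => some (.pos (.eq t2 t1))
  | _ => none

/-- ≐-symmetric closure of the kernel literals. -/
def litsym (φ : DC V D) : List (Lit V D) := lits φ ++ (lits φ).filterMap symmEq

/-- Satisfaction of atoms. -/
def satA (σ : Assg V D) : Atom V D → Prop
  | .bot => False
  | .top => True
  | .eq t1 t2 => ∃ d, evalT σ t1 = some d ∧ evalT σ t2 = some d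
  | .rel R ts => ∃ ds, ts.mapM (evalT σ) = some ds ∧ R ds

/-- Satisfaction of literals. -/
def satL (σ : Assg V D) : Lit V D → Prop
  | .pos a => satA σ a
  | .neg a => (∀ x ∈ varsA a, (σ x).isSome) ∧ ¬ satA σ a

/-- Entailment of data constraints. -/
def sat [DecidableEq V] (σ : Assg V D) : DC V D → Prop
  | .ex x φ => ∃ d : D, sat (Function.update σ x (some d)) φ
  | .conj ls => ∀ l ∈ ls, satL σ l

open Classical in
/-- Restriction of an assignment to a set of variables. -/
noncomputable def restrict (σ : Assg V D) (X : Set V) : Assg V D :=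
  fun x => if x ∈ X then σ x else none

/-- Substitution in terms. -/
def substT [DecidableEq V] (x : V) (t : DTerm V D) : DTerm V D → DTerm V D
  | .var y => if y = x then t else .var y
  | .const d => .const d
  | .app f ts => .app f (ts.attach.map (fun s => substT x t s.1))
decreasing_by simp only [DTerm.app.sizeOf_spec]; have := List.sizeOf_lt_of_mem s.2; omega

def substA [DecidableEq V] (x : V) (t : DTerm V D) : Atom V D → Atom V D
  | .bot => .bot
  | .top => .top
  | .eq t1 t2 => .eq (substT x t t1) (substT x t t2)
  | .rel R ts => .rel R (ts.map (substT x t))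

def substL [DecidableEq V] (x : V) (t : DTerm V D) : Lit V D → Lit V D
  | .pos a => .pos (substA x t a)
  | .neg a => .neg (substA x t a)

/-- Capture-free substitution in data constraints (skipping under a binder of the same name). -/
def substDC [DecidableEq V] (x : V) (t : DTerm V D) : DC V D → DC V D
  | .ex y φ => if y = x then .ex y φ else .ex y (substDC x t φ)
  | .conj ls => .conj (ls.map (substL x t))

/-- Determinants of a variable in an atom. -/
def detA [DecidableEq V] (x : V) : Atom V D → List (DTerm V D)
  | .eq t1 t2 =>
      (match t1 with
        | .var y => if y = x ∧ x ∉ varsT t2 then [t2] else []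
        | _ => []) ++
      (match t2 with
        | .var y => if y = x ∧ x ∉ varsT t1 then [t1] else []
        | _ => [])
  | _ => []

def detL [DecidableEq V] (x : V) : Lit V D → List (DTerm V D)
  | .pos a => detA x a
  | .neg _ => []

/-- Determinants of a variable in a data constraint. -/
def detDC [DecidableEq V] (x : V) : DC V D → List (DTerm V D)
  | .ex y φ => if y = x then [] else detDC x φ
  | .conj ls => ls.flatMap (detL x)

/-- Syntactic existential quantification: substitute the least determinant if one exists. -/
def exFun [DecidableEq V] (x : V) (φ : DC V D) : DC V D :=
  match detDC x φ with
  | [] => .ex x φ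
  | t :: _ => substDC x t φ

/-- Constraint automata over states `Q`, variables `V` (ports and pre/post memory variables)
and data `D`. -/
structure CA (Q V D : Type) where
  states : Set Q
  Pall : Set V
  Pin : Set V
  Pout : Set V
  preM : Set V
  postM : Set V
  trans : Set (Q × Set V × DC V D × Q)
  init : Q

/-- Data constraints occurring on transitions. -/
def CA.dcs (A : CA Q V D) : Set (DC V D) :=
  {φ | ∃ q P q', (q, P, φ, q') ∈ A.trans}

/-- Hide a port: remove it from the port sets and existentially quantify it in data constraints. -/
def CA.hide (A : CA Q V D) (p : V) : CA Q V D :=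
  { A with
    Pall := A.Pall \ {p}, Pin := A.Pin \ {p}, Pout := A.Pout \ {p},
    trans := (fun tr => (tr.1, tr.2.1 \ {p}, DC.ex p tr.2.2.1, tr.2.2.2)) '' A.trans }

/-- Eliminate a port: remove it from the port sets and apply syntactic existential
quantification to data constraints. -/
def CA.elim [DecidableEq V] (A : CA Q V D) (p : V) : CA Q V D :=
  { A with
    Pall := A.Pall \ {p}, Pin := A.Pin \ {p}, Pout := A.Pout \ {p},
    trans := (fun tr => (tr.1, tr.2.1 \ {p}, exFun p tr.2.2.1, tr.2.2.2)) '' A.trans }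

open Classical in
/-- Substitute a data constraint `φ'` for every occurrence of `φ` on transitions. -/
noncomputable def CA.substCA (A : CA Q V D) (φ φ' : DC V D) : CA Q V D :=
  { A with
    trans := (fun tr => (tr.1, tr.2.1, if tr.2.2.1 = φ then φ' else tr.2.2.1, tr.2.2.2)) '' A.trans }

/-- Data commands. -/
inductive Cmd (V D : Type) where
  | skip : Cmd V D
  | nil : Cmd V D                       -- the empty command ε
  | assign : V → DTerm V D → Cmd V D
  | guard : DC V D → Cmd V D → Cmd V D  -- failure statement φ → π
  | seq : Cmd V D → Cmd V D → Cmd V D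

/-- Small-step semantics on configurations; the state `none` is the fail state. -/
inductive Step [DecidableEq V] :
    Cmd V D × Option (Assg V D) → Cmd V D × Option (Assg V D) → Prop where
  | skip {σ : Assg V D} : Step (.skip, some σ) (.nil, some σ)
  | assign {x t} {σ : Assg V D} :
      Step (.assign x t, some σ) (.nil, some (Function.update σ x (evalT σ t)))
  | guardT {φ π} {σ : Assg V D} : sat σ φ → Step (.guard φ π, some σ) (π, some σ)
  | guardF {φ π} {σ : Assg V D} : ¬ sat σ φ → Step (.guard φ π, some σ) (.nil, none)
  | seqStep {π π' π''} {σ σ' : Assg V D} :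
      Step (π, some σ) (π', some σ') → π' ≠ .nil →
      Step (.seq π π'', some σ) (.seq π' π'', some σ')
  | seqDone {π π''} {σ σ' : Assg V D} :
      Step (π, some σ) (.nil, some σ') → Step (.seq π π'', some σ) (π'', some σ')
  | seqFail {π π' π''} {σ : Assg V D} :
      Step (π, some σ) (π', none) → Step (.seq π π'', some σ) (.nil, none)

/-- Reflexive-transitive closure of the small-step semantics. -/
def Steps [DecidableEq V] :
    Cmd V D × Option (Assg V D) → Cmd V D × Option (Assg V D) → Prop :=
  Relation.ReflTransGen Step

/-- Partial-correctness semantics: successfully reachable final states. -/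
def final [DecidableEq V] (π : Cmd V D) (S : Set (Assg V D)) : Set (Assg V D) :=
  {σ' | ∃ σ ∈ S, Steps (π, some σ) (.nil, some σ')}

/-- Total-correctness semantics: additionally contains `none` (fail) if some execution fails. -/
def finalFail [DecidableEq V] (π : Cmd V D) (S : Set (Assg V D)) : Set (Option (Assg V D)) :=
  (some '' final π S) ∪
    {ς | ς = none ∧ ∃ σ ∈ S, ∃ π', Steps (π, some σ) (π', none)}

/-- Partial-correctness Hoare proof system (assertions as sets of assignments). -/
inductive HoareP [DecidableEq V] : Set (Assg V D) → Cmd V D → Set (Assg V D) → Prop where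
  | skip {P} : HoareP P .skip P
  | assign {P : Set (Assg V D)} {x t} :
      HoareP {σ | Function.update σ x (evalT σ t) ∈ P} (.assign x t) P
  | seq {P1 Pm P2 π1 π2} : HoareP P1 π1 Pm → HoareP Pm π2 P2 → HoareP P1 (.seq π1 π2) P2
  | cons {P1 P1' P2 P2' π} : HoareP P1' π P2' → P1 ⊆ P1' → P2' ⊆ P2 → HoareP P1 π P2
  | guard {P P' φ π} : HoareP (P ∩ {σ | sat σ φ}) π P' → HoareP P (.guard φ π) P'

/-- Total-correctness Hoare proof system. -/
inductive HoareT [DecidableEq V] : Set (Assg V D) → Cmd V D → Set (Assg V D) → Prop where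
  | skip {P} : HoareT P .skip P
  | assign {P : Set (Assg V D)} {x t} :
      HoareT {σ | Function.update σ x (evalT σ t) ∈ P} (.assign x t) P
  | seq {P1 Pm P2 π1 π2} : HoareT P1 π1 Pm → HoareT Pm π2 P2 → HoareT P1 (.seq π1 π2) P2
  | cons {P1 P1' P2 P2' π} : HoareT P1' π P2' → P1 ⊆ P1' → P2' ⊆ P2 → HoareT P1 π P2
  | guard {P P' φ π} :
      HoareT P π P' → P ⊆ {σ | sat σ φ} → HoareT P (.guard φ π) P'
  | decomp {P P1 P2 π} : HoareP P π P1 → HoareT P π P2 → HoareT P π (P1 ∩ P2)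

/-- The literal `x ≐ t`. -/
def eqLit (x : V) (t : DTerm V D) : Lit V D := .pos (.eq (.var x) t)

/-- A single-literal data constraint. -/
def litDC (l : Lit V D) : DC V D := .conj [l]

open Classical in
/-- Translation of the ordered equalities: assignment if the variable is fresh,
failure statement otherwise. -/
noncomputable def commEqs [DecidableEq V] (X : Set V) :
    List V → List (V × DTerm V D) → Cmd V D
  | _, [] => .skip
  | done, (x, t) :: rest =>
      .seq (if x ∈ X ∨ x ∈ done then .guard (litDC (eqLit x t)) .skip else .assign x t)
           (commEqs X (x :: done) rest)

/-- Translation of remaining literals into failure statements. -/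
def commRest : List (Lit V D) → Cmd V D
  | [] => .skip
  | l :: rest => .seq (.guard (litDC l) .skip) (commRest rest)

/-- Commandification: output of Algorithm 1 on the linearized literals. -/
noncomputable def commandify [DecidableEq V] (X : Set V)
    (eqs : List (V × DTerm V D)) (rest : List (Lit V D)) : Cmd V D :=
  .seq (commEqs X [] eqs) (commRest rest)

/-- The full literal list `ℓ1, …, ℓ_{n+m}` of a commandification problem. -/
def commLits (eqs : List (V × DTerm V D)) (rest : List (Lit V D)) : List (Lit V D) :=
  eqs.map (fun p => eqLit p.1 p.2) ++ rest

/-- Requirements of the commandification algorithm: the first `n` literals are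
equalities `x_i ≐ t_i` linearized so that all dependencies of each `t_i` are either
uncontrollable (in `X`) or assigned earlier, and every variable outside `X` occurs
among `x_1, …, x_n`. -/
def CommReq [DecidableEq V] (X : Set V)
    (eqs : List (V × DTerm V D)) (rest : List (Lit V D)) : Prop :=
  (∀ l ∈ commLits eqs rest, ∀ y ∈ varsL l, y ∈ X ∨ y ∈ eqs.map Prod.fst) ∧
  (∀ i (h : i < eqs.length), ∀ y ∈ varsT (eqs.get ⟨i, h⟩).2,
      y ∈ X ∨ y ∈ (eqs.take i).map Prod.fst)

/-- B-graphs: hypergraphs whose b-arcs have a set of tails and one head. -/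
structure BGraph (V : Type) where
  arcs : Set (Set V × V)

/-- The single-tailed arc relation obtained by splitting b-arcs. -/
def BGraph.rel (G : BGraph V) (a b : V) : Prop := ∃ T, (T, b) ∈ G.arcs ∧ a ∈ T

/-- Layers of the greedy exploration from the root. -/
def BGraph.layer (G : BGraph V) (root : V) : ℕ → Set V
  | 0 => {root}
  | n + 1 => G.layer root n ∪ {v | ∃ T, (T, v) ∈ G.arcs ∧ T ⊆ G.layer root n}

/-- Relation induced by a choice of one incoming b-arc per vertex. -/
def chosenRel (choice : V → Option (Set V)) (a b : V) : Prop :=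
  ∃ T, choice b = some T ∧ a ∈ T

/-- A ⋆-arborescence: one incoming b-arc per non-root vertex, acyclically. -/
def IsArbor (G : BGraph V) (root : V) (choice : V → Option (Set V)) : Prop :=
  choice root = none ∧
  (∀ v, v ≠ root → ∃ T, choice v = some T ∧ (T, v) ∈ G.arcs) ∧
  (∀ v, ¬ Relation.TransGen (chosenRel choice) v v)

/-- The data relation encoding a data command `π` run from initial states over `X`,
recording the values of the variables `xs`. -/
def cmdRel [DecidableEq V] (π : Cmd V D) (X : Set V) (xs : List V) (ds : List D) : Prop :=
  ∃ σ0 σ : Assg V D, (∀ x ∈ X, (σ0 x).isSome) ∧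
    Steps (π, some σ0) (.nil, some σ) ∧ xs.map σ = ds.map some

open Classical in
/-- `commfun`: encode the commandification of `φ` as a data relation applied to the
ordered free variables of `φ`, when the B-graph of `φ` over `X` has a ⋆-arborescence
and `X ⊆ free(φ)`; otherwise leave `φ` unchanged.  The algorithm producing the data
command and the arborescence test are parameters `alg` and `hasArb`. -/
noncomputable def commfun [LinearOrder V] (alg : DC V D → Set V → Cmd V D)
    (hasArb : DC V D → Set V → Prop) (φ : DC V D) (X : Set V) : DC V D :=
  let xs := (freeDC φ).toFinset.sort (· ≤ ·)
  if hasArb φ X ∧ X ⊆ {x | x ∈ freeDC φ} then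
    .conj [.pos (.rel (fun ds => cmdRel (alg φ X) X xs ds) (xs.map .var))]
  else φ

/-- The uncontrollable variables of a data constraint in an automaton. -/
def CA.uncontr [DecidableEq V] (A : CA Q V D) (φ : DC V D) : Set V :=
  {x | x ∈ freeDC φ} ∩ (A.Pin ∪ A.preM)

/-- Commandify an automaton. -/
noncomputable def CA.comm [LinearOrder V] (A : CA Q V D)
    (alg : DC V D → Set V → Cmd V D) (hasArb : DC V D → Set V → Prop) : CA Q V D :=
  { A with
    trans := (fun tr =>
      (tr.1, tr.2.1, commfun alg hasArb tr.2.2.1 (A.uncontr tr.2.2.1), tr.2.2.2)) '' A.trans }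

/-! Induction on the derivation, carrying two semantic facts at once: every successful run from
the precondition ends in the postcondition, and no run from the precondition aborts. The side
condition `P ⊆ ⟦φ⟧` of the failure-statement rule excludes the guard's own abort; for the
decomposition rule the postcondition `P1 ∩ P2` also needs soundness of the partial-correctness
system, which is proved by the same induction without the failure half. -/

section Soundness

variable {V D : Type} [DecidableEq V]

def CanFail (π : Cmd V D) (σ : Assg V D) : Prop :=
  ∃ π', Steps (π, some σ) (π', none)

lemma steps_nil_eq {s : Option (Assg V D)} {c} (h : Steps (.nil, s) c) : c = (.nil, s) := by
  rcases h.cases_head with rfl | ⟨_, hs, _⟩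
  · rfl
  · cases hs

lemma steps_none_eq {π : Cmd V D} {c} (h : Steps (π, none) c) : c = (π, none) := by
  rcases h.cases_head with rfl | ⟨_, hs, _⟩
  · rfl
  · cases hs

lemma steps_of_forall_step_eq_nil {c₀ c : Cmd V D × Option (Assg V D)} {s}
    (hstep : ∀ c', Step c₀ c' → c' = (.nil, s)) (h : Steps c₀ c) :
    c = c₀ ∨ c = (.nil, s) := by
  rcases h.cases_head with rfl | ⟨c', hs, hrest⟩
  · exact .inl rfl
  · obtain rfl := hstep c' hs
    exact .inr (steps_nil_eq hrest)

lemma steps_skip {σ : Assg V D} {c} (h : Steps (.skip, some σ) c) :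
    c = (.skip, some σ) ∨ c = (.nil, some σ) :=
  steps_of_forall_step_eq_nil (fun _ hs => by cases hs; rfl) h

lemma steps_assign {x : V} {t : DTerm V D} {σ : Assg V D} {c}
    (h : Steps (.assign x t, some σ) c) :
    c = (.assign x t, some σ) ∨ c = (.nil, some (Function.update σ x (evalT σ t))) :=
  steps_of_forall_step_eq_nil (fun _ hs => by cases hs; rfl) h

lemma steps_seq {π1 π2 : Cmd V D} {σ : Assg V D} {c} (h : Steps (.seq π1 π2, some σ) c) :
    (∃ π1' s, c = (.seq π1' π2, s) ∧ Steps (π1, some σ) (π1', s)) ∨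
    (∃ σm, Steps (π1, some σ) (.nil, some σm) ∧ Steps (π2, some σm) c) ∨
    (c = (.nil, none) ∧ CanFail π1 σ) := by
  induction h with
  | refl => exact .inl ⟨π1, some σ, rfl, .refl⟩
  | tail _ hs ih =>
    rcases ih with ⟨π1', s, rfl, h1⟩ | ⟨σm, h1, h2⟩ | ⟨rfl, _⟩
    · cases hs with
      | seqStep hs1 _ => exact .inl ⟨_, _, rfl, h1.tail hs1⟩
      | seqDone hs1 => exact .inr (.inl ⟨_, h1.tail hs1, .refl⟩)
      | seqFail hs1 => exact .inr (.inr ⟨rfl, _, h1.tail hs1⟩)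
    · exact .inr (.inl ⟨σm, h1, h2.tail hs⟩)
    · cases hs

lemma final_mono {π : Cmd V D} {S T : Set (Assg V D)} (hST : S ⊆ T) :
    final π S ⊆ final π T :=
  fun _ ⟨σ, hσ, h⟩ => ⟨σ, hST hσ, h⟩

lemma final_skip (S : Set (Assg V D)) : final .skip S = S := by
  ext σ'
  constructor
  · rintro ⟨σ, hσ, h⟩
    rcases steps_skip h with h | h <;> cases h
    exact hσ
  · exact fun hσ' => ⟨σ', hσ', .single .skip⟩

lemma final_assign (x : V) (t : DTerm V D) (S : Set (Assg V D)) :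
    final (.assign x t) S = (fun σ => Function.update σ x (evalT σ t)) '' S := by
  ext σ'
  constructor
  · rintro ⟨σ, hσ, h⟩
    rcases steps_assign h with h | h <;> cases h
    exact ⟨σ, hσ, rfl⟩
  · rintro ⟨σ, hσ, rfl⟩
    exact ⟨σ, hσ, .single .assign⟩

lemma final_guard (φ : DC V D) (π : Cmd V D) (S : Set (Assg V D)) :
    final (.guard φ π) S = final π (S ∩ {σ | sat σ φ}) := by
  ext σ'
  constructor
  · rintro ⟨σ, hσ, h⟩
    rcases h.cases_head with h | ⟨_, hs, hrest⟩
    · cases h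
    · cases hs with
      | guardT hsat => exact ⟨σ, ⟨hσ, hsat⟩, hrest⟩
      | guardF _ => cases steps_none_eq hrest
  · rintro ⟨σ, ⟨hσ, hsat⟩, h⟩
    exact ⟨σ, hσ, .head (.guardT hsat) h⟩

lemma final_seq_subset (π1 π2 : Cmd V D) (S : Set (Assg V D)) :
    final (.seq π1 π2) S ⊆ final π2 (final π1 S) := by
  rintro σ' ⟨σ, hσ, h⟩
  rcases steps_seq h with ⟨_, _, h, _⟩ | ⟨σm, h1, h2⟩ | ⟨h, _⟩
  · cases h
  · exact ⟨σm, ⟨σ, hσ, h1⟩, h2⟩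
  · cases h

lemma not_canFail_skip (σ : Assg V D) : ¬ CanFail .skip σ := by
  rintro ⟨_, h⟩
  rcases steps_skip h with h | h <;> cases h

lemma not_canFail_assign (x : V) (t : DTerm V D) (σ : Assg V D) :
    ¬ CanFail (.assign x t) σ := by
  rintro ⟨_, h⟩
  rcases steps_assign h with h | h <;> cases h

lemma CanFail.guard {φ : DC V D} {π : Cmd V D} {σ : Assg V D} (h : CanFail (.guard φ π) σ) :
    ¬ sat σ φ ∨ CanFail π σ := by
  obtain ⟨_, h⟩ := h
  rcases h.cases_head with h | ⟨_, hs, hrest⟩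
  · cases h
  · cases hs with
    | guardT _ => exact .inr ⟨_, hrest⟩
    | guardF hns => exact .inl hns

lemma CanFail.seq {π1 π2 : Cmd V D} {σ : Assg V D} (h : CanFail (.seq π1 π2) σ) :
    CanFail π1 σ ∨ ∃ σm ∈ final π1 {σ}, CanFail π2 σm := by
  obtain ⟨_, h⟩ := h
  rcases steps_seq h with ⟨_, _, h, h1⟩ | ⟨σm, h1, h2⟩ | ⟨_, h1⟩
  · cases h
    exact .inl ⟨_, h1⟩
  · exact .inr ⟨σm, ⟨σ, rfl, h1⟩, _, h2⟩
  · exact .inl h1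

lemma finalFail_subset_iff {π : Cmd V D} {S P : Set (Assg V D)} :
    finalFail π S ⊆ some '' P ↔ final π S ⊆ P ∧ ∀ σ ∈ S, ¬ CanFail π σ := by
  simp only [finalFail, Set.union_subset_iff,
    Set.image_subset_image_iff (Option.some_injective _)]
  refine and_congr_right fun _ => ⟨fun h σ hσ hfail => ?_, fun h _ ⟨_, σ, hσ, hfail⟩ => ?_⟩
  · obtain ⟨_, _, hnone⟩ := h ⟨rfl, σ, hσ, hfail⟩
    cases hnone
  · exact absurd hfail (h σ hσ)

theorem HoareP.final_subset {P P' : Set (Assg V D)} {π : Cmd V D} (h : HoareP P π P') :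
    final π P ⊆ P' := by
  induction h with
  | skip => exact (final_skip _).subset
  | assign => exact (final_assign _ _ _).trans_subset fun _ ⟨_, hσ, hσ'⟩ => hσ' ▸ hσ
  | seq _ _ ih1 ih2 => exact (final_seq_subset _ _ _).trans ((final_mono ih1).trans ih2)
  | cons _ hpre hpost ih => exact ((final_mono hpre).trans ih).trans hpost
  | guard _ ih => exact (final_guard _ _ _).trans_subset ih

theorem HoareT.final_subset_and_not_canFail {P P' : Set (Assg V D)} {π : Cmd V D}
    (h : HoareT P π P') : final π P ⊆ P' ∧ ∀ σ ∈ P, ¬ CanFail π σ := by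
  induction h with
  | skip => exact ⟨(final_skip _).subset, fun σ _ => not_canFail_skip σ⟩
  | assign =>
    exact ⟨(final_assign _ _ _).trans_subset fun _ ⟨_, hσ, hσ'⟩ => hσ' ▸ hσ,
      fun σ _ => not_canFail_assign _ _ σ⟩
  | seq _ _ ih1 ih2 =>
    refine ⟨(final_seq_subset _ _ _).trans ((final_mono ih1.1).trans ih2.1),
      fun σ hσ hfail => ?_⟩
    rcases hfail.seq with hfail1 | ⟨σm, hσm, hfail2⟩
    · exact ih1.2 σ hσ hfail1
    · exact ih2.2 σm (ih1.1 (final_mono (Set.singleton_subset_iff.2 hσ) hσm)) hfail2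
  | cons _ hpre hpost ih =>
    exact ⟨((final_mono hpre).trans ih.1).trans hpost, fun σ hσ => ih.2 σ (hpre hσ)⟩
  | guard _ hsat ih =>
    refine ⟨(final_guard _ _ _).trans_subset ((final_mono Set.inter_subset_left).trans ih.1),
      fun σ hσ hfail => ?_⟩
    rcases hfail.guard with hns | hfail
    · exact hns (hsat hσ)
    · exact ih.2 σ hσ hfail
  | decomp hp _ ih => exact ⟨Set.subset_inter hp.final_subset ih.1, ih.2⟩

end Soundness

/-- soundness of the total-correctness Hoare proof system: a derivable
triple {P} π {P'} guarantees that every execution from a P-state terminates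
successfully (never failing) in a P'-state. -/
theorem hoareT_sound {V D : Type} [DecidableEq V]
    (P P' : Set (Assg V D)) (π : Cmd V D) (h : HoareT P π P') :
    finalFail π P ⊆ some '' P' :=
  finalFail_subset_iff.2 h.final_subset_and_not_canFail
end

section
/- Soundness of commandification: if the linearized precedence ≺ satisfies the requirements of the commandification algorithm for a conjunction ℓ1 ∧ ⋯ ∧ ℓ_{n+m} (the first n literals being equalities x_i ≐ t_i ordered so that all dependencies of each t_i are assigned earlier or lie in the uncontrollable set X), then the command π produced by the algorithm—which translates each x_i ≐ t_i to the assignment x_i := t_i if x_i ∉ X ∪ {x_1,...,x_{i-1}} and to a failure statement otherwise, and translates the remaining m literals to failure statements—satisfies the partial-correctness triple { ⋀_{x∈X} x ≐ x } π { ℓ1 ∧ ⋯ ∧ ℓ_{n+m} }. -/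
/-!
Algorithm 1 processes `x_1 ≐ t_1, …, x_n ≐ t_n` in order, and the invariant after step `i` is:
`ℓ_1, …, ℓ_i` hold, every variable of `X ∪ {x_1, …, x_i}` is defined, and the assertion reads
no other variable. An assignment `x_{i+1} := t_{i+1}` only happens when `x_{i+1}` lies outside
that set, so it preserves the invariant (a frame argument), and `t_{i+1}` evaluates to a value
because all its variables are already defined, so `x_{i+1} ≐ t_{i+1}` holds afterwards. Every
other literal becomes a failure statement, which establishes it on every successful run.
-/

section Soundness

variable {V D : Type}

theorem List.mapM_option_congr {α β : Type} {f g : α → Option β} :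
    ∀ {l : List α}, (∀ a ∈ l, f a = g a) → l.mapM f = l.mapM g
  | [], _ => rfl
  | a :: l, h => by
    simp only [List.mapM_cons, h a List.mem_cons_self,
      List.mapM_option_congr fun b hb => h b (List.mem_cons_of_mem a hb)]

theorem List.isSome_mapM_option {α β : Type} {f : α → Option β} :
    ∀ {l : List α}, (∀ a ∈ l, (f a).isSome) → (l.mapM f).isSome
  | [], _ => rfl
  | a :: l, h => by
    obtain ⟨b, hb⟩ := Option.isSome_iff_exists.1 (h a List.mem_cons_self)
    obtain ⟨bs, hbs⟩ := Option.isSome_iff_exists.1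
      (List.isSome_mapM_option fun b hb => h b (List.mem_cons_of_mem a hb))
    simp [hb, hbs]

theorem evalT_dependsOn : ∀ t : DTerm V D, DependsOn (evalT · t) {y | y ∈ varsT t}
  | .var x, σ, σ', h => by simpa [evalT, varsT] using h
  | .const _, _, _, _ => by simp [evalT]
  | .app f ts, σ, σ', h => by
    simp only [evalT]
    congr 1
    exact List.mapM_option_congr fun t _ => evalT_dependsOn t.1 fun y hy =>
      h y (by simpa [varsT] using ⟨t.1, t.2, hy⟩)
decreasing_by simp only [DTerm.app.sizeOf_spec]; have := List.sizeOf_lt_of_mem t.2; omega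

theorem isSome_evalT {σ : Assg V D} :
    ∀ t : DTerm V D, (∀ y ∈ varsT t, (σ y).isSome) → (evalT σ t).isSome
  | .var x, h => by simpa [evalT, varsT] using h
  | .const _, _ => by simp [evalT]
  | .app f ts, h => by
    simp only [evalT, Option.isSome_map]
    exact List.isSome_mapM_option fun t _ => isSome_evalT t.1 fun y hy =>
      h y (by simpa [varsT] using ⟨t.1, t.2, hy⟩)
decreasing_by simp only [DTerm.app.sizeOf_spec]; have := List.sizeOf_lt_of_mem t.2; omega

theorem satL_eqLit_iff {σ : Assg V D} {x : V} {t : DTerm V D} :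
    satL σ (eqLit x t) ↔ ∃ d, σ x = some d ∧ evalT σ t = some d := by
  simp [satL, eqLit, satA, evalT]

theorem dependsOn_mem_inter {F G : Set (Assg V D)} {S : Set V} (hF : DependsOn (· ∈ F) S)
    (hG : DependsOn (· ∈ G) S) : DependsOn (· ∈ F ∩ G) S :=
  fun _ _ h => congrArg₂ And (hF h) (hG h)

theorem satL_eqLit_dependsOn {x : V} {t : DTerm V D} {S : Set V} (hx : x ∈ S)
    (ht : ∀ y ∈ varsT t, y ∈ S) : DependsOn (· ∈ {σ | satL σ (eqLit x t)}) S := by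
  intro σ σ' h
  have hevalT : evalT σ t = evalT σ' t := evalT_dependsOn t fun y hy => h y (ht y hy)
  simp only [Set.mem_ofPred_eq, satL_eqLit_iff, h x hx, hevalT]

def DepsAssigned (X : Set V) : List V → List (V × DTerm V D) → Prop
  | _, [] => True
  | done, (x, t) :: rest => (∀ y ∈ varsT t, y ∈ X ∨ y ∈ done) ∧ DepsAssigned X (x :: done) rest

theorem depsAssigned_of_forall_take {X : Set V} :
    ∀ {eqs : List (V × DTerm V D)} {done : List V},
    (∀ i (h : i < eqs.length), ∀ y ∈ varsT (eqs.get ⟨i, h⟩).2,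
      y ∈ X ∨ y ∈ done ∨ y ∈ (eqs.take i).map Prod.fst) →
    DepsAssigned X done eqs
  | [], _, _ => trivial
  | (x, t) :: rest, done, h => by
    refine ⟨fun y hy => by simpa using h 0 (by simp) y hy, depsAssigned_of_forall_take ?_⟩
    intro i hi y hy
    have := h (i + 1) (by simpa using hi) y hy
    simp only [List.take_succ_cons, List.map_cons, List.mem_cons] at this ⊢
    tauto

variable [DecidableEq V]

theorem sat_litDC {σ : Assg V D} {l : Lit V D} : sat σ (litDC l) ↔ satL σ l := by
  simp [sat, litDC]

theorem hoareP_guard_litDC {P : Set (Assg V D)} {l : Lit V D} :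
    HoareP P (.guard (litDC l) .skip) (P ∩ {σ | satL σ l}) := by
  simpa only [sat_litDC] using HoareP.guard (HoareP.skip (P := P ∩ {σ | sat σ (litDC l)}))

theorem hoareP_assign_eqLit {F : Set (Assg V D)} {S : Set V} {x : V} {t : DTerm V D}
    (hF : DependsOn (· ∈ F) S) (hdef : ∀ σ ∈ F, ∀ y ∈ S, (σ y).isSome)
    (hx : x ∉ S) (ht : ∀ y ∈ varsT t, y ∈ S) :
    HoareP F (.assign x t) (F ∩ {σ | satL σ (eqLit x t)}) := by
  refine HoareP.cons HoareP.assign (fun σ hσ => ?_) subset_rfl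
  have hagree : ∀ y ∈ S, Function.update σ x (evalT σ t) y = σ y :=
    fun y hy => Function.update_of_ne (ne_of_mem_of_not_mem hy hx) _ _
  obtain ⟨d, hd⟩ := Option.isSome_iff_exists.1 (isSome_evalT t fun y hy => hdef σ hσ y (ht y hy))
  refine ⟨(hF fun y hy => (hagree y hy).symm).mp hσ, satL_eqLit_iff.2 ⟨d, by simp [hd], ?_⟩⟩
  exact (evalT_dependsOn t fun y hy => hagree y (ht y hy)).trans hd

theorem commEqs_sound {X : Set V} :
    ∀ {eqs : List (V × DTerm V D)} {done : List V} {F : Set (Assg V D)},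
    DepsAssigned X done eqs → DependsOn (· ∈ F) (X ∪ {y | y ∈ done}) →
    (∀ σ ∈ F, ∀ y, y ∈ X ∨ y ∈ done → (σ y).isSome) →
    HoareP F (commEqs X done eqs) (F ∩ {σ | ∀ p ∈ eqs, satL σ (eqLit p.1 p.2)})
  | [], _, F, _, _, _ =>
    HoareP.cons HoareP.skip subset_rfl fun σ hσ => ⟨hσ, by simp⟩
  | (x, t) :: rest, done, F, ⟨ht, hrest⟩, hF, hdef => by
    set F' := F ∩ {σ | satL σ (eqLit x t)}
    have hF' : DependsOn (· ∈ F') (X ∪ {y | y ∈ x :: done}) := by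
      have hS : X ∪ {y | y ∈ done} ⊆ X ∪ {y | y ∈ x :: done} :=
        Set.union_subset_union_right X fun y hy => List.mem_cons_of_mem x hy
      refine dependsOn_mem_inter (hF.mono hS) (satL_eqLit_dependsOn (by simp) fun y hy => ?_)
      simpa using (ht y hy).imp_right (List.mem_cons_of_mem x)
    have hdef' : ∀ σ ∈ F', ∀ y, y ∈ X ∨ y ∈ x :: done → (σ y).isSome := by
      rintro σ ⟨hσ, hσx⟩ y hy
      rw [List.mem_cons] at hy
      rcases hy with hy | rfl | hy
      · exact hdef σ hσ y (.inl hy)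
      · obtain ⟨d, hd, -⟩ := satL_eqLit_iff.1 hσx
        simp [hd]
      · exact hdef σ hσ y (.inr hy)
    rw [commEqs]
    refine HoareP.seq (Pm := F') ?_ (HoareP.cons (commEqs_sound hrest hF' hdef') subset_rfl ?_)
    · split_ifs with hx
      · exact hoareP_guard_litDC
      · exact hoareP_assign_eqLit hF hdef hx ht
    · rintro σ ⟨⟨hσ, hσx⟩, hσrest⟩
      exact ⟨hσ, List.forall_mem_cons.2 ⟨hσx, hσrest⟩⟩

theorem commRest_sound :
    ∀ {rest : List (Lit V D)} {F : Set (Assg V D)},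
    HoareP F (commRest rest) (F ∩ {σ | ∀ l ∈ rest, satL σ l})
  | [], _ => HoareP.cons HoareP.skip subset_rfl fun σ hσ => ⟨hσ, by simp⟩
  | l :: rest, _ => by
    refine HoareP.seq hoareP_guard_litDC (HoareP.cons commRest_sound subset_rfl ?_)
    rintro σ ⟨⟨hσ, hσl⟩, hσrest⟩
    exact ⟨hσ, List.forall_mem_cons.2 ⟨hσl, hσrest⟩⟩

end Soundness

/-- soundness of commandification: under the algorithm's requirements,
the generated command satisfies the partial-correctness triple
{ ⋀_{x∈X} x ≐ x } π { ℓ1 ∧ ⋯ ∧ ℓ_{n+m} }. -/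
theorem commandify_sound {V D : Type} [DecidableEq V] (X : Set V)
    (eqs : List (V × DTerm V D)) (rest : List (Lit V D))
    (hreq : CommReq X eqs rest) :
    HoareP {σ : Assg V D | ∀ x ∈ X, (σ x).isSome}
      (commandify X eqs rest)
      {σ : Assg V D | ∀ l ∈ commLits eqs rest, satL σ l} := by
  have hdeps : DepsAssigned X [] eqs :=
    depsAssigned_of_forall_take fun i hi y hy => (hreq.2 i hi y hy).imp_right .inr
  have hpre : DependsOn (· ∈ {σ : Assg V D | ∀ x ∈ X, (σ x).isSome}) (X ∪ {y | y ∈ []}) :=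
    fun σ σ' h => by simp +contextual only [Set.mem_ofPred_eq, h, Set.mem_union, true_or]
  refine HoareP.seq (commEqs_sound hdeps hpre (by simp +contextual))
    (HoareP.cons commRest_sound subset_rfl ?_)
  rintro σ ⟨⟨-, heqs⟩, hrest⟩
  exact List.forall_mem_append.2 ⟨List.forall_mem_map.2 heqs, hrest⟩
end

section
/- Completeness of commandification: under the same requirements, if σ' is any data assignment satisfying ℓ1 ∧ ⋯ ∧ ℓ_{n+m}, then the generated command π satisfies the total-correctness triple { ⋀_{x∈X} x ≐ σ'(x) } π { ⋀_{x∈X∪{x_1,...,x_n}} x ≐ σ'(x) }; in particular, execution of π starting from the restriction of σ' to X terminates successfully (never fails) and assigns every x_i the value σ'(x_i). -/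
/-! Started in a state that agrees with `σ'` on `X`, the command maintains the invariant that the
state agrees with `σ'` on `X` and on the variables handled so far. By the linearization, each
`t_i` and each guard only reads such variables, so it evaluates as under `σ'`: an assignment
`x_i := t_i` therefore stores `σ'(x_i)` (as `σ'` satisfies `x_i ≐ t_i`), and no guard fails,
since `σ'` satisfies every literal. -/

theorem List.mapM_congr_of_forall_mem {m : Type → Type} [Monad m] [LawfulMonad m] {α β : Type}
    {f g : α → m β} : ∀ {l : List α}, (∀ a ∈ l, f a = g a) → l.mapM f = l.mapM g
  | [], _ => rfl
  | a :: l, h => by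
    simp only [List.mapM_cons, h a List.mem_cons_self,
      List.mapM_congr_of_forall_mem fun b hb => h b (List.mem_cons_of_mem a hb)]

section Agreement

variable {V D : Type} {σ τ : Assg V D}

theorem evalT_congr : ∀ (t : DTerm V D), (∀ x ∈ varsT t, σ x = τ x) → evalT σ t = evalT τ t
  | .var x, h => by simpa [evalT] using h x (by simp [varsT])
  | .const _, _ => by simp [evalT]
  | .app f ts, h => by
    rw [evalT, evalT]
    congr 1
    exact List.mapM_congr_of_forall_mem fun s hs => evalT_congr s.1
      fun x hx => h x (by rw [varsT]; exact List.mem_flatMap.2 ⟨s, hs, hx⟩)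
decreasing_by simp only [DTerm.app.sizeOf_spec]; have := List.sizeOf_lt_of_mem s.2; omega

theorem satA_congr (a : Atom V D) (h : ∀ x ∈ varsA a, σ x = τ x) : satA σ a ↔ satA τ a := by
  cases a with
  | bot | top => rfl
  | eq t₁ t₂ =>
    simp only [varsA, List.mem_append] at h
    simp only [satA, evalT_congr t₁ fun x hx => h x (Or.inl hx),
      evalT_congr t₂ fun x hx => h x (Or.inr hx)]
  | rel R ts =>
    have hts : ts.mapM (evalT σ) = ts.mapM (evalT τ) :=
      List.mapM_congr_of_forall_mem fun t ht => evalT_congr t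
        fun x hx => h x (List.mem_flatMap.2 ⟨t, ht, hx⟩)
    simp only [satA, hts]

theorem satL_congr (l : Lit V D) (h : ∀ x ∈ varsL l, σ x = τ x) : satL σ l ↔ satL τ l := by
  cases l with
  | pos a => exact satA_congr a h
  | neg a =>
    simp only [satL, satA_congr a h]
    refine and_congr_left' (forall₂_congr fun x hx => ?_)
    rw [h x hx]

/-- The assertion `⋀_{x ∈ S} x ≐ σ'(x)`. -/
def agreesOn (σ' : Assg V D) (S : Set V) : Set (Assg V D) :=
  {σ | ∀ x ∈ S, (σ x).isSome ∧ σ x = σ' x}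

theorem agreesOn_anti (σ' : Assg V D) {S T : Set V} (h : S ⊆ T) :
    agreesOn σ' T ⊆ agreesOn σ' S :=
  fun _ hσ x hx => hσ x (h hx)

end Agreement

section Dependencies

variable {V D : Type}

/-- Every `t_i` only reads variables that are uncontrollable or among `done, x_1, …, x_{i-1}`. -/
def DepsOrdered (X : Set V) : List V → List (V × DTerm V D) → Prop
  | _, [] => True
  | done, (x, t) :: rest => (∀ y ∈ varsT t, y ∈ X ∨ y ∈ done) ∧ DepsOrdered X (x :: done) rest

theorem depsOrdered_of_forall_get {X : Set V} :
    ∀ {eqs : List (V × DTerm V D)} {done : List V},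
    (∀ i (h : i < eqs.length), ∀ y ∈ varsT (eqs.get ⟨i, h⟩).2,
      y ∈ X ∨ y ∈ done ∨ y ∈ (eqs.take i).map Prod.fst) →
    DepsOrdered X done eqs
  | [], _, _ => trivial
  | (x, t) :: rest, done, h => by
    refine ⟨fun y hy => by simpa using h 0 (Nat.succ_pos _) y hy,
      depsOrdered_of_forall_get fun i hi y hy => ?_⟩
    have := h (i + 1) (Nat.succ_lt_succ hi) y hy
    simp only [List.take_succ_cons, List.map_cons, List.mem_cons] at this ⊢
    tauto

end Dependencies

section Hoare

variable {V D : Type} [DecidableEq V]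

theorem sat_litDC_of_agreesOn {σ' : Assg V D} {S : Set V} {l : Lit V D} (hl : satL σ' l)
    (hS : ∀ x ∈ varsL l, x ∈ S) {σ : Assg V D} (hσ : σ ∈ agreesOn σ' S) : sat σ (litDC l) := by
  intro l' hl'
  rw [List.mem_singleton.1 hl']
  exact (satL_congr l fun x hx => (hσ x (hS x hx)).2).2 hl

theorem hoareT_guard_litDC {σ' : Assg V D} {S : Set V} {l : Lit V D} (hl : satL σ' l)
    (hS : ∀ x ∈ varsL l, x ∈ S) :
    HoareT (agreesOn σ' S) (.guard (litDC l) .skip) (agreesOn σ' S) :=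
  HoareT.guard HoareT.skip fun _ => sat_litDC_of_agreesOn hl hS

theorem hoareT_assign_agreesOn {σ' : Assg V D} {S : Set V} {x : V} {t : DTerm V D}
    (hl : satL σ' (eqLit x t)) (hS : ∀ y ∈ varsT t, y ∈ S) :
    HoareT (agreesOn σ' S) (.assign x t) (agreesOn σ' (insert x S)) := by
  obtain ⟨d, hx, ht⟩ : ∃ d, σ' x = some d ∧ evalT σ' t = some d := by
    simpa [eqLit, satL, satA, evalT] using hl
  refine HoareT.cons HoareT.assign (fun σ hσ => ?_) subset_rfl
  intro y hy
  rcases eq_or_ne y x with rfl | hne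
  · have hσt : evalT σ t = evalT σ' t := evalT_congr t fun z hz => (hσ z (hS z hz)).2
    simp [hσt, ht, hx]
  · rw [Function.update_of_ne hne]
    exact hσ y (Set.mem_of_mem_insert_of_ne hy hne)

theorem hoareT_commRest {σ' : Assg V D} {S : Set V} :
    ∀ {rest : List (Lit V D)}, (∀ l ∈ rest, satL σ' l) → (∀ l ∈ rest, ∀ y ∈ varsL l, y ∈ S) →
    HoareT (agreesOn σ' S) (commRest rest) (agreesOn σ' S)
  | [], _, _ => HoareT.skip
  | l :: _, hsat, hvars =>
    HoareT.seq (hoareT_guard_litDC (hsat l List.mem_cons_self) (hvars l List.mem_cons_self))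
      (hoareT_commRest (fun l' h => hsat l' (List.mem_cons_of_mem l h))
        fun l' h => hvars l' (List.mem_cons_of_mem l h))

theorem hoareT_commEqs {X : Set V} {σ' : Assg V D} :
    ∀ {eqs : List (V × DTerm V D)} {done : List V}, DepsOrdered X done eqs →
    (∀ p ∈ eqs, satL σ' (eqLit p.1 p.2)) →
    HoareT (agreesOn σ' {y | y ∈ X ∨ y ∈ done}) (commEqs X done eqs)
      (agreesOn σ' {y | y ∈ X ∨ y ∈ done ∨ y ∈ eqs.map Prod.fst})
  | [], _, _, _ =>
    HoareT.cons HoareT.skip subset_rfl (agreesOn_anti σ' fun y hy => by simpa using hy)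
  | (x, t) :: rest, done, ⟨hdeps, hrest⟩, hsat => by
    have hl : satL σ' (eqLit x t) := hsat (x, t) List.mem_cons_self
    have hins : {y | y ∈ X ∨ y ∈ x :: done} = insert x {y | y ∈ X ∨ y ∈ done} := by
      ext y; simp only [List.mem_cons, Set.mem_ofPred_eq, Set.mem_insert_iff]; tauto
    rw [commEqs]
    refine HoareT.seq (Pm := agreesOn σ' {y | y ∈ X ∨ y ∈ x :: done}) ?_
      (HoareT.cons (hoareT_commEqs hrest fun p hp => hsat p (List.mem_cons_of_mem _ hp))
        subset_rfl (agreesOn_anti σ' fun y hy => ?_))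
    · rw [hins]
      split_ifs with hx
      · rw [Set.insert_eq_of_mem (s := {y | y ∈ X ∨ y ∈ done}) hx]
        refine hoareT_guard_litDC hl fun y hy => ?_
        simp only [eqLit, varsL, varsA, varsT, List.mem_append, List.mem_singleton] at hy
        rcases hy with rfl | hy
        exacts [hx, hdeps y hy]
      · exact hoareT_assign_agreesOn hl hdeps
    · simp only [List.map_cons, List.mem_cons, Set.mem_ofPred_eq] at hy ⊢
      tauto

end Hoare

/-- completeness of commandification: if σ' satisfies all the literals,
the generated command satisfies the total-correctness triple
{ ⋀_{x∈X} x ≐ σ'(x) } π { ⋀_{x∈X∪{x_1,…,x_n}} x ≐ σ'(x) }. -/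
theorem commandify_complete {V D : Type} [DecidableEq V] (X : Set V)
    (eqs : List (V × DTerm V D)) (rest : List (Lit V D))
    (hreq : CommReq X eqs rest) (σ' : Assg V D)
    (hσ' : ∀ l ∈ commLits eqs rest, satL σ' l) :
    HoareT {σ : Assg V D | ∀ x ∈ X, (σ x).isSome ∧ σ x = σ' x}
      (commandify X eqs rest)
      {σ : Assg V D | ∀ x, x ∈ X ∨ x ∈ eqs.map Prod.fst → (σ x).isSome ∧ σ x = σ' x} := by
  obtain ⟨hvars, hdeps⟩ := hreq
  have hordered : DepsOrdered X [] eqs :=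
    depsOrdered_of_forall_get fun i hi y hy => (hdeps i hi y hy).imp_right Or.inr
  have hsatEqs : ∀ p ∈ eqs, satL σ' (eqLit p.1 p.2) := fun p hp =>
    hσ' _ (List.mem_append_left _ (List.mem_map_of_mem hp))
  have hEqs := hoareT_commEqs hordered hsatEqs
  have hRest : HoareT (agreesOn σ' {y | y ∈ X ∨ y ∈ eqs.map Prod.fst}) (commRest rest)
      (agreesOn σ' {y | y ∈ X ∨ y ∈ eqs.map Prod.fst}) :=
    hoareT_commRest (fun l hl => hσ' l (List.mem_append_right _ hl))
      fun l hl => hvars l (List.mem_append_right _ hl)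
  refine HoareT.seq (HoareT.cons hEqs ?_ ?_) hRest <;>
    exact agreesOn_anti σ' fun y hy => by simpa using hy
end
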